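/- (Šapirovskiĭ) If X is a regular Hausdorff space, then |X| ≤ πχ(X)^(c(X)·ψ(X)). -/

import Mathlib

open Cardinal Set TopologicalSpace

universe u

/-- The density of a space: the least cardinality of a dense subset. -/
noncomputable def dens (X : Type u) [TopologicalSpace X] : Cardinal.{u} :=
  sInf {c : Cardinal.{u} | ∃ D : Set X, Dense D ∧ #D = c}

/-- A local π-base at a point: a family of nonempty open sets such that every
open set containing the point contains a member of the family. -/
def IsLocalPiBase (X : Type u) [TopologicalSpace X] (x : X) (𝒱 : Set (Set X)) : Prop :=
  (∀ V ∈ 𝒱, IsOpen V ∧ V.Nonempty) ∧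
    ∀ U : Set X, IsOpen U → x ∈ U → ∃ V ∈ 𝒱, V ⊆ U

/-- The π-character at a point: the least infinite cardinality of a local π-base. -/
noncomputable def piCharPoint (X : Type u) [TopologicalSpace X] (x : X) : Cardinal.{u} :=
  sInf {κ : Cardinal.{u} | ℵ₀ ≤ κ ∧ ∃ 𝒱 : Set (Set X), IsLocalPiBase X x 𝒱 ∧ #𝒱 ≤ κ}

/-- The π-character of a space. -/
noncomputable def piChar (X : Type u) [TopologicalSpace X] : Cardinal.{u} :=
  ⨆ x : X, piCharPoint X x

/-- A π-base for a space. -/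
def IsPiBase (X : Type u) [TopologicalSpace X] (𝒱 : Set (Set X)) : Prop :=
  (∀ V ∈ 𝒱, IsOpen V ∧ V.Nonempty) ∧
    ∀ U : Set X, IsOpen U → U.Nonempty → ∃ V ∈ 𝒱, V ⊆ U

/-- The π-weight of a space: the least infinite cardinality of a π-base. -/
noncomputable def piWeight (X : Type u) [TopologicalSpace X] : Cardinal.{u} :=
  sInf {κ : Cardinal.{u} | ℵ₀ ≤ κ ∧ ∃ 𝒱 : Set (Set X), IsPiBase X 𝒱 ∧ #𝒱 ≤ κ}

/-- The cellularity of a space: the least infinite cardinal bounding the size of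
every pairwise disjoint family of nonempty open sets. -/
noncomputable def cellularity (X : Type u) [TopologicalSpace X] : Cardinal.{u} :=
  sInf {κ : Cardinal.{u} | ℵ₀ ≤ κ ∧ ∀ 𝒞 : Set (Set X),
    (∀ U ∈ 𝒞, IsOpen U ∧ U.Nonempty) → 𝒞.PairwiseDisjoint id → #𝒞 ≤ κ}

/-- The set of infinite cardinals κ witnessing the nonquasiregularity degree:
every nonempty open set U contains a nonempty set ⋂₀ 𝒱 with 𝒱 an open family of
size at most κ and ⋂_{V ∈ 𝒱} cl V ⊆ U. -/
def nqSet (X : Type u) [TopologicalSpace X] : Set Cardinal.{u} :=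
  {κ : Cardinal.{u} | ℵ₀ ≤ κ ∧ ∀ U : Set X, IsOpen U → U.Nonempty →
    ∃ 𝒱 : Set (Set X), (∀ V ∈ 𝒱, IsOpen V) ∧ #𝒱 ≤ κ ∧
      (⋂₀ 𝒱).Nonempty ∧ (⋂ V ∈ 𝒱, closure V) ⊆ U}

/-- A space is an nq-space if its nonquasiregularity degree is defined. -/
def IsNqSpace (X : Type u) [TopologicalSpace X] : Prop :=
  (nqSet X).Nonempty

/-- The nonquasiregularity degree of a space. -/
noncomputable def nq (X : Type u) [TopologicalSpace X] : Cardinal.{u} :=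
  sInf (nqSet X)

/-- The closed pseudocharacter at a point. -/
noncomputable def psiCPoint (X : Type u) [TopologicalSpace X] (x : X) : Cardinal.{u} :=
  sInf {κ : Cardinal.{u} | ℵ₀ ≤ κ ∧ ∃ 𝒱 : Set (Set X),
    (∀ V ∈ 𝒱, IsOpen V ∧ x ∈ V) ∧ #𝒱 ≤ κ ∧ (⋂ V ∈ 𝒱, closure V) = {x}}

/-- The closed pseudocharacter of a space. -/
noncomputable def psiC (X : Type u) [TopologicalSpace X] : Cardinal.{u} :=
  sInf {κ : Cardinal.{u} | ℵ₀ ≤ κ ∧ ∀ x : X, ∃ 𝒱 : Set (Set X),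
    (∀ V ∈ 𝒱, IsOpen V ∧ x ∈ V) ∧ #𝒱 ≤ κ ∧ (⋂ V ∈ 𝒱, closure V) = {x}}

/-- The dense closed pseudocharacter of a space. -/
noncomputable def dPsiC (X : Type u) [TopologicalSpace X] : Cardinal.{u} :=
  sInf {κ : Cardinal.{u} | ℵ₀ ≤ κ ∧ ∃ D : Set X, Dense D ∧ ∀ d ∈ D, psiCPoint X d ≤ κ}

/-- The weak closed pseudocharacter at a point: the least infinite cardinality of a
family 𝒱 of open sets with ⋂_{V ∈ 𝒱} cl V = {x}. -/
noncomputable def wPsiCPoint (X : Type u) [TopologicalSpace X] (x : X) : Cardinal.{u} :=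
  sInf {κ : Cardinal.{u} | ℵ₀ ≤ κ ∧ ∃ 𝒱 : Set (Set X),
    (∀ V ∈ 𝒱, IsOpen V) ∧ #𝒱 ≤ κ ∧ (⋂ V ∈ 𝒱, closure V) = {x}}

/-- The weak closed pseudocharacter of a space. -/
noncomputable def wPsiC (X : Type u) [TopologicalSpace X] : Cardinal.{u} :=
  ⨆ x : X, wPsiCPoint X x

/-- The pseudocharacter of a space: the least infinite cardinal κ such that every
point is the intersection of at most κ open sets. -/
noncomputable def psi (X : Type u) [TopologicalSpace X] : Cardinal.{u} :=
  sInf {κ : Cardinal.{u} | ℵ₀ ≤ κ ∧ ∀ x : X, ∃ 𝒱 : Set (Set X),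
    (∀ V ∈ 𝒱, IsOpen V) ∧ #𝒱 ≤ κ ∧ ⋂₀ 𝒱 = {x}}

/-- The Lindelöf degree of a space. -/
noncomputable def lindelofDegree (X : Type u) [TopologicalSpace X] : Cardinal.{u} :=
  sInf {κ : Cardinal.{u} | ℵ₀ ≤ κ ∧ ∀ 𝒰 : Set (Set X), (∀ U ∈ 𝒰, IsOpen U) →
    ⋃₀ 𝒰 = Set.univ → ∃ 𝒱 ⊆ 𝒰, #𝒱 ≤ κ ∧ ⋃₀ 𝒱 = Set.univ}

/-- The cardinality of the collection of regular open subsets of a space. -/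
noncomputable def cardRO (X : Type u) [TopologicalSpace X] : Cardinal.{u} :=
  #{R : Set X | R = interior (closure R)}

/-- A space is quasiregular if every nonempty open set contains a nonempty open
set whose closure is contained in it. -/
def Quasiregular (X : Type u) [TopologicalSpace X] : Prop :=
  ∀ U : Set X, IsOpen U → U.Nonempty →
    ∃ V : Set X, IsOpen V ∧ V.Nonempty ∧ closure V ⊆ U

/-!
Šapirovskiĭ's argument goes through the π-weight. Put `μ = πχ(X) ^ c(X)`. Close off a set `D` of
at most `μ` points so that, whenever at most `c(X)` members of the local π-bases at points of `D`
have a non-dense union, `D` contains a point outside the closure of that union. Because every open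
family has a subfamily of size `c(X)` whose union has the same closure, regularity makes the local
π-bases at the points of `D` a π-base `P`, so `πw(X) ≤ μ`.

With `κ = c(X) ψ(X)`, regularity gives each `x` a family `𝒩ₓ` of at most `ψ(X)` open
neighbourhoods with `⋂ {closure V | V ∈ 𝒩ₓ} = {x}`, and each `V ∈ 𝒩ₓ` contains a subfamily
`𝒲 V ⊆ P` of size `c(X)` whose union is dense in `V`. Hence `x` is determined by the family
`{𝒲 V | V ∈ 𝒩ₓ}` of at most `κ` subsets of `P` of size at most `κ`, and
`|X| ≤ (μ ^ κ) ^ κ = πχ(X) ^ κ`.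
-/

section CardinalFunctions

variable {X : Type u} [TopologicalSpace X]

theorem cellularity_mem : cellularity X ∈ {κ : Cardinal.{u} | ℵ₀ ≤ κ ∧ ∀ 𝒞 : Set (Set X),
    (∀ U ∈ 𝒞, IsOpen U ∧ U.Nonempty) → 𝒞.PairwiseDisjoint id → #𝒞 ≤ κ} :=
  csInf_mem ⟨max #(Set X) ℵ₀, le_max_right _ _, fun 𝒞 _ _ => (mk_set_le 𝒞).trans (le_max_left _ _)⟩

theorem aleph0_le_cellularity : ℵ₀ ≤ cellularity X :=
  cellularity_mem.1

theorem mk_le_cellularity {𝒞 : Set (Set X)} (h𝒞 : ∀ U ∈ 𝒞, IsOpen U ∧ U.Nonempty)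
    (hdisj : 𝒞.PairwiseDisjoint id) : #𝒞 ≤ cellularity X :=
  cellularity_mem.2 𝒞 h𝒞 hdisj

theorem psi_mem [T1Space X] : psi X ∈ {κ : Cardinal.{u} | ℵ₀ ≤ κ ∧ ∀ x : X,
    ∃ 𝒢 : Set (Set X), (∀ G ∈ 𝒢, IsOpen G) ∧ #𝒢 ≤ κ ∧ ⋂₀ 𝒢 = {x}} := by
  refine csInf_mem ⟨max #(Set X) ℵ₀, le_max_right _ _, fun x => ?_⟩
  refine ⟨(fun y => {y}ᶜ) '' {x}ᶜ, ?_, (mk_set_le _).trans (le_max_left _ _), ?_⟩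
  · rintro _ ⟨y, -, rfl⟩
    exact isOpen_compl_singleton
  · ext z
    simp only [sInter_image, mem_iInter, mem_compl_iff, mem_singleton_iff]
    exact ⟨fun h => by_contra fun hzx => h z hzx rfl, fun hzx y hyx hzy => hyx (hzy ▸ hzx)⟩

theorem aleph0_le_psi [T1Space X] : ℵ₀ ≤ psi X :=
  psi_mem.1

theorem exists_sInter_eq_singleton [T1Space X] (x : X) :
    ∃ 𝒢 : Set (Set X), (∀ G ∈ 𝒢, IsOpen G) ∧ #𝒢 ≤ psi X ∧ ⋂₀ 𝒢 = {x} :=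
  psi_mem.2 x

theorem piCharPoint_mem (x : X) : piCharPoint X x ∈ {κ : Cardinal.{u} | ℵ₀ ≤ κ ∧
    ∃ 𝒱 : Set (Set X), IsLocalPiBase X x 𝒱 ∧ #𝒱 ≤ κ} :=
  csInf_mem ⟨max #(Set X) ℵ₀, le_max_right _ _, {V | IsOpen V ∧ V.Nonempty},
    ⟨fun _ hV => hV, fun U hU hx => ⟨U, ⟨hU, x, hx⟩, subset_rfl⟩⟩,
    (mk_set_le _).trans (le_max_left _ _)⟩

theorem piCharPoint_le_piChar (x : X) : piCharPoint X x ≤ piChar X :=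
  le_ciSup bddAbove_of_small x

theorem aleph0_le_piChar [Nonempty X] : ℵ₀ ≤ piChar X :=
  (piCharPoint_mem (Classical.arbitrary X)).1.trans (piCharPoint_le_piChar _)

theorem exists_isLocalPiBase_mk_le_piChar (x : X) :
    ∃ 𝒱, IsLocalPiBase X x 𝒱 ∧ #𝒱 ≤ piChar X :=
  (piCharPoint_mem x).2.imp fun _ h => ⟨h.1, h.2.trans (piCharPoint_le_piChar x)⟩

end CardinalFunctions

theorem exists_maximal_pairwiseDisjoint {α : Type*} (R : Set (Set α)) :
    ∃ 𝒞 ⊆ R, 𝒞.PairwiseDisjoint id ∧ ∀ C ∈ R, C.Nonempty → ∃ C' ∈ 𝒞, (C ∩ C').Nonempty := by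
  obtain ⟨𝒞, ⟨h𝒞R, h𝒞⟩, hmax⟩ := zorn_subset {𝒞 | 𝒞 ⊆ R ∧ 𝒞.PairwiseDisjoint id}
    fun c hc hchain => ⟨⋃₀ c, ⟨sUnion_subset fun _ hs => (hc hs).1,
      (hchain.pairwiseDisjoint_sUnion id).2 fun _ hs => (hc hs).2⟩,
      fun _ hs => subset_sUnion_of_mem hs⟩
  refine ⟨𝒞, h𝒞R, h𝒞, fun C hCR hC => ?_⟩
  by_contra! hdisj
  have hC𝒞 : C ∉ 𝒞 := fun hmem => hC.ne_empty (by simpa using hdisj C hmem)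
  refine hC𝒞 (hmax ⟨insert_subset hCR h𝒞R, h𝒞.insert fun C' hC' _ => ?_⟩ (subset_insert _ _)
    (mem_insert _ _))
  exact disjoint_iff_inter_eq_empty.2 (hdisj C' hC')

section Cellularity

variable {X : Type u} [TopologicalSpace X]

theorem exists_subset_mk_le_cellularity_subset_closure {𝒰 : Set (Set X)}
    (h𝒰 : ∀ U ∈ 𝒰, IsOpen U) :
    ∃ 𝒰' ⊆ 𝒰, #𝒰' ≤ cellularity X ∧ ⋃₀ 𝒰 ⊆ closure (⋃₀ 𝒰') := by
  -- a maximal disjoint family of nonempty open sets refining `𝒰`, each member replaced by a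
  -- member of `𝒰` containing it
  obtain ⟨𝒞, h𝒞R, h𝒞, hmax⟩ :=
    exists_maximal_pairwiseDisjoint {C : Set X | IsOpen C ∧ C.Nonempty ∧ ∃ U ∈ 𝒰, C ⊆ U}
  choose! u hu𝒰 hCu using fun C (hC : C ∈ 𝒞) => (h𝒞R hC).2.2
  refine ⟨u '' 𝒞, image_subset_iff.2 hu𝒰, mk_image_le.trans
    (mk_le_cellularity (fun C hC => ⟨(h𝒞R hC).1, (h𝒞R hC).2.1⟩) h𝒞), ?_⟩
  rintro y ⟨U, hU, hyU⟩
  refine mem_closure_iff.2 fun N hN hyN => ?_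
  obtain ⟨C, hC, z, ⟨hzN, -⟩, hzC⟩ :=
    hmax (N ∩ U) ⟨hN.inter (h𝒰 U hU), ⟨y, hyN, hyU⟩, U, hU, inter_subset_right⟩ ⟨y, hyN, hyU⟩
  exact ⟨z, hzN, u C, mem_image_of_mem u hC, hCu C hC hzC⟩

theorem IsPiBase.interior_subset_closure_sUnion {P : Set (Set X)} (hP : IsPiBase X P)
    (V : Set X) : interior V ⊆ closure (⋃₀ {W ∈ P | W ⊆ V}) := by
  intro y hy
  refine mem_closure_iff.2 fun N hN hyN => ?_
  obtain ⟨W, hWP, hW⟩ := hP.2 (N ∩ interior V) (hN.inter isOpen_interior) ⟨y, hyN, hy⟩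
  obtain ⟨w, hw⟩ := (hP.1 W hWP).2
  exact ⟨w, (hW hw).1, W, ⟨hWP, hW.trans (inter_subset_right.trans interior_subset)⟩, hw⟩

theorem IsPiBase.exists_subset_mk_le_cellularity {P : Set (Set X)} (hP : IsPiBase X P)
    (V : Set X) :
    ∃ 𝒲 ⊆ P, #𝒲 ≤ cellularity X ∧ ⋃₀ 𝒲 ⊆ V ∧ interior V ⊆ closure (⋃₀ 𝒲) := by
  obtain ⟨𝒲, h𝒲, h𝒲card, hdense⟩ :=
    exists_subset_mk_le_cellularity_subset_closure (𝒰 := {W ∈ P | W ⊆ V})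
      fun W hW => (hP.1 W hW.1).1
  exact ⟨𝒲, fun W hW => (h𝒲 hW).1, h𝒲card, sUnion_subset fun W hW => (h𝒲 hW).2,
    (hP.interior_subset_closure_sUnion V).trans (closure_minimal hdense isClosed_closure)⟩

end Cellularity

section ClosingOff

variable {α : Type u}

theorem mk_bounded_subset_le_power {s : Set α} {ν : Cardinal.{u}} (hs : #s ≤ ν) (hν : ℵ₀ ≤ ν)
    (κ : Cardinal.{u}) : #{t : Set α // t ⊆ s ∧ #t ≤ κ} ≤ ν ^ κ :=
  (mk_bounded_subset_le s κ).trans (power_le_power_right (max_le hs hν))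

theorem exists_subset_mk_le_subset_biUnion {ι : Type u} {f : ι → Set α} {D : Set ι}
    {W : Set α} (hW : W ⊆ ⋃ i ∈ D, f i) : ∃ A ⊆ D, #A ≤ #W ∧ W ⊆ ⋃ i ∈ A, f i := by
  choose g hgD hg using fun w : W => mem_iUnion₂.1 (hW w.2)
  exact ⟨range g, range_subset_iff.2 hgD, mk_range_le,
    fun w hw => mem_biUnion (mem_range_self ⟨w, hw⟩) (hg ⟨w, hw⟩)⟩

noncomputable def cumulativeIterate (F : Set α → Set α) : Ordinal.{u} → Set α :=
  Ordinal.lt_wf.fix fun o S => F (⋃ j : Iio o, S j j.2)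

theorem cumulativeIterate_eq (F : Set α → Set α) (o : Ordinal.{u}) :
    cumulativeIterate F o = F (⋃ j : Iio o, cumulativeIterate F j) := by
  rw [cumulativeIterate, WellFounded.fix_eq]

theorem mk_iUnion_Iio_le {o : Ordinal.{u}} {g : Iio o → Set α} {μ : Cardinal.{u}}
    (h : ∀ j, #(g j) ≤ μ) : #(⋃ j, g j) ≤ o.card * μ := by
  rw [← (Ordinal.ToType.mk (o := o)).symm.surjective.iUnion_comp g, ← Cardinal.mk_toType]
  exact (mk_iUnion_le _).trans (mul_le_mul_right (ciSup_le' fun _ => h _) _)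

theorem mk_cumulativeIterate_le {F : Set α → Set α} {μ : Cardinal.{u}} (hμ : ℵ₀ ≤ μ)
    (hF : ∀ A : Set α, #A ≤ μ → #(F A) ≤ μ) {o : Ordinal.{u}} (ho : o.card ≤ μ) :
    #(cumulativeIterate F o) ≤ μ := by
  induction o using WellFoundedLT.induction with
  | _ o IH =>
    rw [cumulativeIterate_eq]
    refine hF _ ((mk_iUnion_Iio_le fun j => IH j j.2 ?_).trans ?_)
    · exact (Ordinal.card_le_card j.2.le).trans ho
    · exact (mul_le_mul' ho le_rfl).trans (mul_eq_self hμ).le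

theorem exists_lt_ord_succ_subset_iUnion_Iio {κ : Cardinal.{u}} (hκ : ℵ₀ ≤ κ)
    {S : Ordinal.{u} → Set α} {A : Set α} (hA : A ⊆ ⋃ j : Iio (Order.succ κ).ord, S j)
    (hAκ : #A ≤ κ) : ∃ o < (Order.succ κ).ord, A ⊆ ⋃ j : Iio o, S j := by
  choose j hj using fun a : A => mem_iUnion.1 (hA a.2)
  have hcof : #A < (Order.succ κ).ord.cof := by
    rw [(isRegular_succ hκ).cof_ord]
    exact hAκ.trans_lt (Order.lt_succ κ)
  refine ⟨⨆ a, Order.succ (j a).1, Ordinal.iSup_lt_of_lt_cof hcof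
    fun a => (isSuccLimit_ord (hκ.trans (Order.le_succ κ))).succ_lt (j a).2, fun a ha => ?_⟩
  refine mem_iUnion.2 ⟨⟨j ⟨a, ha⟩, mem_Iio.2 ((Order.lt_succ _).trans_le ?_)⟩, hj ⟨a, ha⟩⟩
  exact Ordinal.le_iSup (fun a : A => Order.succ (j a).1) ⟨a, ha⟩

/-- `D` is the union of the `κ⁺` stages of `B ↦ ⋃ {Φ A | A ⊆ B, #A ≤ κ}`. -/
theorem exists_mk_le_forall_subset {κ μ : Cardinal.{u}} (hκ : ℵ₀ ≤ κ) (hμ : ℵ₀ ≤ μ)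
    (hμκ : μ ^ κ = μ) (Φ : Set α → Set α) (hΦ : ∀ A : Set α, #A ≤ κ → #(Φ A) ≤ μ) :
    ∃ D : Set α, #D ≤ μ ∧ ∀ A ⊆ D, #A ≤ κ → Φ A ⊆ D := by
  set F : Set α → Set α := fun B => ⋃ A : {A : Set α // A ⊆ B ∧ #A ≤ κ}, Φ A
  have hF : ∀ B : Set α, #B ≤ μ → #(F B) ≤ μ := fun B hB => calc
    #(F B) ≤ μ ^ κ * μ := (mk_iUnion_le _).trans (mul_le_mul'
      (mk_bounded_subset_le_power hB hμ κ) (ciSup_le' fun A => hΦ A A.2.2))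
    _ = μ := by rw [hμκ, mul_eq_self hμ]
  have hκμ : Order.succ κ ≤ μ := Order.succ_le_of_lt <| calc
    κ < 2 ^ κ := cantor κ
    _ ≤ μ ^ κ := power_le_power_right ((natCast_lt_aleph0 (n := 2)).le.trans hμ)
    _ = μ := hμκ
  refine ⟨⋃ j : Iio (Order.succ κ).ord, cumulativeIterate F j, ?_, fun A hA hAκ => ?_⟩
  · refine (mk_iUnion_Iio_le fun j => mk_cumulativeIterate_le hμ hF ?_).trans ?_
    · exact (Ordinal.card_le_card j.2.le).trans ((card_ord _).trans_le hκμ)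
    · rw [card_ord]
      exact (mul_le_mul' hκμ le_rfl).trans (mul_eq_self hμ).le
  · obtain ⟨o, ho, hAo⟩ := exists_lt_ord_succ_subset_iUnion_Iio hκ hA hAκ
    refine fun a ha => mem_iUnion.2 ⟨⟨o, ho⟩, ?_⟩
    rw [cumulativeIterate_eq]
    exact mem_iUnion.2 ⟨⟨A, hAo, hAκ⟩, ha⟩

end ClosingOff

section PiWeight

variable {X : Type u} [TopologicalSpace X] [RegularSpace X]

/-- If an open `U ∋ z` contained no member of `P`, take `G ∋ z` open with `closure G ⊆ U`: the
members of `P` missing `G` have a union whose closure contains `D`, and a `cellularity`-sized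
subfamily of them would then be dense although it misses `G`. -/
theorem isPiBase_biUnion_of_dense {𝒱 : X → Set (Set X)} (h𝒱 : ∀ x, IsLocalPiBase X x (𝒱 x))
    {D : Set X} (hD : ∀ W ⊆ ⋃ x ∈ D, 𝒱 x, #W ≤ cellularity X → D ⊆ closure (⋃₀ W) →
      Dense (⋃₀ W)) :
    IsPiBase X (⋃ x ∈ D, 𝒱 x) := by
  set P := ⋃ x ∈ D, 𝒱 x
  have hPopen : ∀ V ∈ P, IsOpen V ∧ V.Nonempty := fun V hV => by
    obtain ⟨x, -, hV⟩ := mem_iUnion₂.1 hV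
    exact (h𝒱 x).1 V hV
  refine ⟨hPopen, fun U hU ⟨z, hzU⟩ => ?_⟩
  by_contra! hno
  obtain ⟨G, ⟨hzG, hG⟩, hGU⟩ := (hasBasis_opens_closure z).mem_iff.1 (hU.mem_nhds hzU)
  have hDG : ∀ x ∈ D, x ∉ closure G := fun x hx hxG => by
    obtain ⟨V, hV, hVU⟩ := (h𝒱 x).2 U hU (hGU hxG)
    exact hno V (mem_biUnion hx hV) hVU
  set 𝒰 := {V ∈ P | V ⊆ Gᶜ}
  have hD𝒰 : D ⊆ closure (⋃₀ 𝒰) := fun x hx => mem_closure_iff.2 fun N hN hxN => by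
    obtain ⟨V, hV, hVN⟩ :=
      (h𝒱 x).2 (N ∩ (closure G)ᶜ) (hN.inter isClosed_closure.isOpen_compl) ⟨hxN, hDG x hx⟩
    obtain ⟨v, hv⟩ := ((h𝒱 x).1 V hV).2
    exact ⟨v, (hVN hv).1, V, ⟨mem_biUnion hx hV,
      hVN.trans (inter_subset_right.trans (compl_subset_compl.2 subset_closure))⟩, hv⟩
  obtain ⟨𝒰', h𝒰'𝒰, h𝒰'card, h𝒰'⟩ :=
    exists_subset_mk_le_cellularity_subset_closure fun V (hV : V ∈ 𝒰) => (hPopen V hV.1).1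
  have hdense : Dense (⋃₀ 𝒰') := hD 𝒰' (fun V hV => (h𝒰'𝒰 hV).1) h𝒰'card
    (hD𝒰.trans (closure_minimal h𝒰' isClosed_closure))
  obtain ⟨y, hyG, V, hV, hyV⟩ := hdense.inter_open_nonempty G hG ⟨z, hzG⟩
  exact (h𝒰'𝒰 hV).2 hyV hyG

theorem exists_isPiBase_mk_le [Nonempty X] :
    ∃ P : Set (Set X), IsPiBase X P ∧ #P ≤ piChar X ^ cellularity X := by
  set κ := cellularity X
  set μ := piChar X ^ κ
  have hκ : ℵ₀ ≤ κ := aleph0_le_cellularity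
  have hπμ : piChar X ≤ μ := self_le_power _ (one_le_aleph0.trans hκ)
  have hμ : ℵ₀ ≤ μ := aleph0_le_piChar.trans hπμ
  have hμκ : μ ^ κ = μ := by rw [← power_mul, mul_eq_self hκ]
  have hκμ : κ ≤ μ := (cantor κ).le.trans
    (power_le_power_right ((natCast_lt_aleph0 (n := 2)).le.trans aleph0_le_piChar))
  choose 𝒱 h𝒱 h𝒱card using exists_isLocalPiBase_mk_le_piChar (X := X)
  have hL : ∀ A : Set X, #A ≤ μ → #(⋃ x ∈ A, 𝒱 x) ≤ μ := fun A hA => calc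
    #(⋃ x ∈ A, 𝒱 x) ≤ μ * μ :=
      (mk_biUnion_le _ _).trans (mul_le_mul' hA (ciSup_le' fun x => (h𝒱card x).trans hπμ))
    _ = μ := mul_eq_self hμ
  have hpick_exists : ∀ W : Set (Set X), ∃ p, ¬Dense (⋃₀ W) → p ∉ closure (⋃₀ W) := fun W => by
    by_cases h : Dense (⋃₀ W)
    exacts [⟨Classical.arbitrary X, absurd h⟩, (not_forall.1 h).imp fun _ hp _ => hp]
  choose pick hpick using hpick_exists
  obtain ⟨D, hD, hDclosed⟩ := exists_mk_le_forall_subset hκ hμ hμκ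
    (fun A => pick '' {W | W ⊆ ⋃ x ∈ A, 𝒱 x ∧ #W ≤ κ})
    fun A hA => mk_image_le.trans <| (mk_bounded_subset_le_power
      (hL A (hA.trans hκμ)) hμ κ).trans_eq hμκ
  refine ⟨⋃ x ∈ D, 𝒱 x, isPiBase_biUnion_of_dense h𝒱 fun W hW hWκ hDW => ?_, hL D hD⟩
  by_contra hWdense
  obtain ⟨A, hAD, hAW, hWA⟩ := exists_subset_mk_le_subset_biUnion hW
  exact hpick W hWdense (hDW (hDclosed A hAD (hAW.trans hWκ) ⟨W, ⟨hWA, hWκ⟩, rfl⟩))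

end PiWeight

section CardinalityBound

variable {X : Type u} [TopologicalSpace X] [RegularSpace X] [T1Space X]

theorem exists_biInter_closure_eq_singleton (x : X) :
    ∃ 𝒩 : Set (Set X), (∀ V ∈ 𝒩, IsOpen V ∧ x ∈ V) ∧ #𝒩 ≤ psi X ∧ ⋂ V ∈ 𝒩, closure V = {x} := by
  obtain ⟨𝒢, h𝒢, h𝒢card, h𝒢x⟩ := exists_sInter_eq_singleton x
  have hx𝒢 : ∀ G ∈ 𝒢, x ∈ G := fun G hG => (h𝒢x.ge rfl : x ∈ ⋂₀ 𝒢) G hG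
  have hreg : ∀ G ∈ 𝒢, ∃ V, (x ∈ V ∧ IsOpen V) ∧ closure V ⊆ G := fun G hG =>
    (hasBasis_opens_closure x).mem_iff.1 ((h𝒢 G hG).mem_nhds (hx𝒢 G hG))
  choose! r hr hrG using hreg
  refine ⟨r '' 𝒢, ?_, mk_image_le.trans h𝒢card, subset_antisymm ?_ ?_⟩
  · rintro _ ⟨G, hG, rfl⟩
    exact (hr G hG).symm
  · refine fun y hy => h𝒢x.le fun G hG => hrG G hG ?_
    exact mem_iInter₂.1 hy (r G) (mem_image_of_mem r hG)
  · rintro _ rfl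
    refine mem_iInter₂.2 fun V hV => subset_closure ?_
    obtain ⟨G, hG, rfl⟩ := hV
    exact (hr G hG).1

theorem mk_le_power_of_isPiBase {P : Set (Set X)} (hP : IsPiBase X P) {μ : Cardinal.{u}}
    (hμ : ℵ₀ ≤ μ) (hPμ : #P ≤ μ) : #X ≤ μ ^ (cellularity X * psi X) := by
  set κ := cellularity X * psi X
  have hcκ : cellularity X ≤ κ := le_mul_right (aleph0_pos.trans_le aleph0_le_psi).ne'
  have hψκ : psi X ≤ κ := le_mul_left (aleph0_pos.trans_le aleph0_le_cellularity).ne'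
  have hκ : ℵ₀ ≤ κ := aleph0_le_psi.trans hψκ
  choose 𝒩 h𝒩 h𝒩card h𝒩x using exists_biInter_closure_eq_singleton (X := X)
  choose 𝒲 h𝒲P h𝒲card h𝒲V h𝒲dense using hP.exists_subset_mk_le_cellularity
  have hx𝒲 : ∀ x, ∀ V ∈ 𝒩 x, x ∈ closure (⋃₀ 𝒲 V) ∧ closure (⋃₀ 𝒲 V) ⊆ closure V :=
    fun x V hV => ⟨h𝒲dense V ((h𝒩 x V hV).1.interior_eq.symm ▸ (h𝒩 x V hV).2),
      closure_mono (h𝒲V V)⟩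
  have hT : ∀ x, ⋂ 𝒰 ∈ 𝒲 '' 𝒩 x, closure (⋃₀ 𝒰) = {x} := fun x => by
    rw [biInter_image, ← h𝒩x x]
    exact subset_antisymm (biInter_mono subset_rfl fun V hV => (hx𝒲 x V hV).2)
      ((h𝒩x x).le.trans (singleton_subset_iff.2 (mem_iInter₂.2 fun V hV => (hx𝒲 x V hV).1)))
  let S : Set (Set (Set X)) := {𝒰 | 𝒰 ⊆ P ∧ #𝒰 ≤ κ}
  let T : X → {𝒯 : Set (Set (Set X)) // 𝒯 ⊆ S ∧ #𝒯 ≤ κ} := fun x =>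
    ⟨𝒲 '' 𝒩 x, image_subset_iff.2 fun V _ => ⟨h𝒲P V, (h𝒲card V).trans hcκ⟩,
      mk_image_le.trans ((h𝒩card x).trans hψκ)⟩
  have hTinj : Function.Injective T := fun x y hxy =>
    singleton_injective <| (hT x).symm.trans <| by
      rw [show 𝒲 '' 𝒩 x = 𝒲 '' 𝒩 y from congrArg Subtype.val hxy]
      exact hT y
  calc #X ≤ (μ ^ κ) ^ κ := (mk_le_of_injective hTinj).trans
        (mk_bounded_subset_le_power ((mk_bounded_subset_le_power hPμ hμ κ))
          (hμ.trans (self_le_power μ (one_le_aleph0.trans hκ))) κ)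
    _ = μ ^ κ := by rw [← power_mul, mul_eq_self hκ]

end CardinalityBound

/-- Šapirovskiĭ: If `X` is regular and Hausdorff then
`|X| ≤ πχ(X)^(c(X)·ψ(X))`. -/
theorem stmt_16 (X : Type u) [TopologicalSpace X] [RegularSpace X] [T2Space X] :
    #X ≤ piChar X ^ (cellularity X * psi X) := by
  rcases isEmpty_or_nonempty X with hX | hX
  · simp
  obtain ⟨P, hP, hPcard⟩ := exists_isPiBase_mk_le (X := X)
  have hc : ℵ₀ ≤ cellularity X := aleph0_le_cellularity
  have hμ : ℵ₀ ≤ piChar X ^ cellularity X :=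
    aleph0_le_piChar.trans (self_le_power _ (one_le_aleph0.trans hc))
  calc #X ≤ (piChar X ^ cellularity X) ^ (cellularity X * psi X) :=
        mk_le_power_of_isPiBase hP hμ hPcard
    _ = piChar X ^ (cellularity X * psi X) := by rw [← power_mul, ← mul_assoc, mul_eq_self hc]
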